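/- arXiv:2507.17620 — 4 statements merged into one kernel-verified Lean document; each statement's English description precedes it below -/
import Mathlib

section
/- Antiexchange property: let X ⊂ ℙ^N be a variety and S ⊆ X a set that is extendably convex (i.e. S = X ∩ conv(S)). If x, y ∉ S, x ≠ y, and x ∈ conv_X(S ∪ {y}), then y ∉ conv_X(S ∪ {x}). -/
/-- Antiexchange property: let `X ⊂ ℙ^N` be a variety and `S ⊆ X` extendably convex
(i.e. `S = X ∩ conv(S)`).  If `x, y ∉ S`, `x ≠ y`, and `x ∈ conv_X(S ∪ {y})`, then
`y ∉ conv_X(S ∪ {x})`, where `conv_X(A) := X ∩ conv(A)`. -/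
theorem stmt_4 {N : ℕ} (X S : Set (Fin (N + 1) → ℝ)) (hSX : S ⊆ X)
    (hconv : S = X ∩ convexHull ℝ S) (x y : Fin (N + 1) → ℝ)
    (hxX : x ∈ X) (hyX : y ∈ X) (hx : x ∉ S) (hy : y ∉ S) (hxy : x ≠ y)
    (h : x ∈ X ∩ convexHull ℝ (S ∪ {y})) :
    y ∉ X ∩ convexHull ℝ (S ∪ {x}) := by
  rintro ⟨-, hy2⟩
  obtain ⟨-, hx2⟩ := h
  rcases S.eq_empty_or_nonempty with hS | hS
  · subst hS
    rw [Set.empty_union, convexHull_singleton] at hx2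
    exact hxy hx2
  · rw [Set.union_singleton, convexHull_insert hS] at hx2 hy2
    rw [mem_convexJoin] at hx2 hy2
    obtain ⟨y', hy', p, hp, a, a', ha, ha', haa, hxeq⟩ := hx2
    obtain ⟨x', hx', q, hq, b, b', hb, hb', hbb, hyeq⟩ := hy2
    rw [Set.mem_singleton_iff] at hy' hx'
    rw [hy'] at hxeq
    rw [hx'] at hyeq
    -- x = a•y + a'•p,  y = b•x + b'•q
    have ha1 : a < 1 := by
      rcases lt_or_eq_of_le (by linarith : a ≤ 1) with h1 | h1
      · exact h1
      · exfalso
        have ha'0 : a' = 0 := by linarith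
        apply hxy
        rw [← hxeq, h1, ha'0, one_smul, zero_smul, add_zero]
    have hb1 : b ≤ 1 := by linarith
    have hc : (0:ℝ) < 1 - a * b := by nlinarith
    have key : (1 - a * b) • y = (b * a') • p + b' • q := by
      rw [sub_smul, one_smul, sub_eq_iff_eq_add']
      calc y = b • x + b' • q := hyeq.symm
        _ = b • (a • y + a' • p) + b' • q := by rw [hxeq]
        _ = (a * b) • y + ((b * a') • p + b' • q) := by
            rw [smul_add, smul_smul, smul_smul, mul_comm b a]; abel
    have hyconv : y ∈ convexHull ℝ S := by
      have hy' : y = (b * a' / (1 - a * b)) • p + (b' / (1 - a * b)) • q := by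
        have h0 : y = (1 - a * b)⁻¹ • ((1 - a * b) • y) := by
          rw [smul_smul, inv_mul_cancel₀ hc.ne', one_smul]
        rw [h0, key, smul_add, smul_smul, smul_smul, div_eq_inv_mul, div_eq_inv_mul]
      rw [hy']
      exact (convex_convexHull ℝ S) hp hq (by positivity) (by positivity)
        (by rw [← add_div, div_eq_one_iff_eq hc.ne']; linear_combination b * haa + hbb)
    exact hy (hconv ▸ ⟨hyX, hyconv⟩ : y ∈ S)
end

section
/- Cutting preserves independence: let G be a graph on vertex set [n] whose edges {i,j} index columns Z_i ∧ Z_j of ∧² Z for a generic (k+m)×n matrix Z (k = 2). If the columns indexed by the edges of G are linearly independent in ∧² ℝ^{k+m} for generic Z on n vertices, then for any cut graph Cut(G, e, v) (replacing edge uv by uv′ for a new vertex v′), the corresponding columns are linearly independent for generic matrices with n+1 columns. -/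
/-- The wedge `Z_i ∧ Z_j` of the `i`-th and `j`-th columns of a matrix `Z`, as an element
of the exterior algebra of `ℝ^{m+2}`. -/
noncomputable def wedgeCol (m : ℕ) {n : ℕ} (Z : Matrix (Fin (m + 2)) (Fin n) ℝ)
    (i j : Fin n) : ExteriorAlgebra ℝ (Fin (m + 2) → ℝ) :=
  ExteriorAlgebra.ιMulti ℝ 2 ![fun a => Z a i, fun a => Z a j]

/-- Cutting preserves independence (`k = 2`): let `E` be the edge set of a graph on `n`
vertices.  If for some (equivalently, Zariski-generic) `(m+2) × n` matrix `Z` the vectors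
`{Z_i ∧ Z_j : ij ∈ E}` are linearly independent, then for the cut graph
`Cut(E, uv, v)` — obtained by introducing a new vertex `v′` and replacing the edge `uv`
by `uv′` — there is an `(m+2) × (n+1)` matrix for which the corresponding
wedge vectors are linearly independent. -/
theorem stmt_8 (m n : ℕ) (E : Finset (Fin n × Fin n)) (u v : Fin n)
    (huv : (u, v) ∈ E)
    (h : ∃ Z : Matrix (Fin (m + 2)) (Fin n) ℝ,
      LinearIndependent ℝ (fun e : E => wedgeCol m Z e.1.1 e.1.2)) :
    ∃ Z' : Matrix (Fin (m + 2)) (Fin (n + 1)) ℝ,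
      LinearIndependent ℝ
        (fun e : (insert (Fin.castSucc u, Fin.last n)
            ((E.erase (u, v)).image (fun p => (p.1.castSucc, p.2.castSucc))) :
              Finset (Fin (n + 1) × Fin (n + 1))) =>
          wedgeCol m Z' e.1.1 e.1.2) := by
  obtain ⟨Z, hZ⟩ := h
  classical
  set g : Fin (n + 1) → Fin n := fun j => if hj : (j : ℕ) < n then ⟨j, hj⟩ else v with hg
  have hgcast : ∀ i : Fin n, g i.castSucc = i := by
    intro i
    simp only [hg]
    rw [dif_pos (by simpa using i.isLt)]
    ext; simp
  have hglast : g (Fin.last n) = v := by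
    simp [hg]
  set S : Finset (Fin (n + 1) × Fin (n + 1)) :=
    insert (Fin.castSucc u, Fin.last n)
      ((E.erase (u, v)).image (fun p => (p.1.castSucc, p.2.castSucc))) with hS
  have hchar : ∀ e ∈ S, e = (Fin.castSucc u, Fin.last n) ∨
      ∃ p ∈ E.erase (u, v), e = (p.1.castSucc, p.2.castSucc) := by
    intro e he
    rcases Finset.mem_insert.mp he with h1 | h1
    · exact Or.inl h1
    · obtain ⟨p, hp, hpe⟩ := Finset.mem_image.mp h1
      exact Or.inr ⟨p, hp, hpe.symm⟩
  have hmem : ∀ e ∈ S, (g e.1, g e.2) ∈ E := by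
    intro e he
    rcases hchar e he with h1 | ⟨p, hp, h1⟩
    · subst h1; simp only [hgcast, hglast]; exact huv
    · subst h1; simp only [hgcast]
      exact Finset.mem_of_mem_erase hp
  refine ⟨fun a j => Z a (g j), ?_⟩
  let F : S → E := fun e => ⟨(g e.1.1, g e.1.2), hmem e.1 e.2⟩
  have hFinj : Function.Injective F := by
    rintro ⟨e, he⟩ ⟨e', he'⟩ heq
    have heq' : (g e.1, g e.2) = (g e'.1, g e'.2) := congrArg Subtype.val heq
    have h1 : g e.1 = g e'.1 := congrArg Prod.fst heq'
    have h2 : g e.2 = g e'.2 := congrArg Prod.snd heq'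
    apply Subtype.ext
    rcases hchar e he with hc | ⟨p, hp, hc⟩ <;>
      rcases hchar e' he' with hc' | ⟨p', hp', hc'⟩
    · show e = e'
      rw [hc, hc']
    · exfalso
      subst hc; subst hc'
      simp only [hgcast, hglast] at h1 h2
      exact (Finset.mem_erase.mp hp').1 (by rw [Prod.ext_iff]; exact ⟨h1.symm, h2.symm⟩)
    · exfalso
      subst hc; subst hc'
      simp only [hgcast, hglast] at h1 h2
      exact (Finset.mem_erase.mp hp).1 (by rw [Prod.ext_iff]; exact ⟨h1, h2⟩)
    · subst hc; subst hc'
      simp only [hgcast] at h1 h2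
      simp [Prod.ext_iff, h1, h2]
  have : (fun e : S => wedgeCol m (fun a j => Z a (g j)) e.1.1 e.1.2) =
      (fun e : E => wedgeCol m Z e.1.1 e.1.2) ∘ F := rfl
  rw [this]
  exact hZ.comp F hFinj
end

section
/- Every facet inequality from the amplituhedron boundary description is a facet of the exterior cyclic polytope: for Z ∈ Mat_{>0}(k+m, n) with m even and n = k+m generic enough, the hyperplane ⟨Y (i₁ i₁+1) ⋯ (i_{m/2} i_{m/2}+1)⟩ = 0 in ℙ(∧^k ℝ^{k+m}) contains exactly C(n,k) − C(n−m,k) vertices of the exterior cyclic polytope C_{k,m,n}(Z), and all remaining vertices lie strictly on one side; in particular for n = k+m the hyperplane contains C(k+m,k) − 1 linearly independent vertices and is facet-defining. -/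
open scoped Classical

lemma mysign (N : ℕ) (σ : Equiv.Perm (Fin N)) : Equiv.Perm.sign σ = Equiv.Perm.signAux σ := by
  refine Equiv.Perm.swap_induction_on' σ (by simp [Equiv.Perm.signAux_one]) ?_
  intro f x y hxy ih
  rw [Equiv.Perm.signAux_mul, map_mul, ih, Equiv.Perm.signAux_swap hxy,
    Equiv.Perm.sign_swap hxy]

lemma det_pos (k p n : ℕ) (hp : 0 < p) (hn : k + 2 * p ≤ n)
    (Z : Matrix (Fin (k + 2 * p)) (Fin n) ℝ)
    (hZ : ∀ g : Fin (k + 2 * p) → Fin n, StrictMono g → 0 < (Z.submatrix id g).det)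
    (q : Fin (2 * p) → Fin n) (hq : StrictMono q)
    (hpair : ∀ b b' : Fin (2 * p), (b : ℕ) % 2 = 0 → (b' : ℕ) = (b : ℕ) + 1 →
      (q b' : ℕ) = (q b : ℕ) + 1)
    (J : Finset (Fin n)) (hJ : J.card = k)
    (hdisj : J ∩ Finset.image q Finset.univ = ∅) :
    0 < (Z.submatrix id
        (Fin.append (fun a => ((J.orderIsoOfFin hJ) a : Fin n)) q)).det := by
  have hNZ : NeZero (k + 2 * p) := ⟨by omega⟩
  set j : Fin k → Fin n := fun a => ((J.orderIsoOfFin hJ) a : Fin n) with hjdef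
  have hj : StrictMono j := fun a b hab => by
    simpa [hjdef] using (J.orderIsoOfFin hJ).strictMono hab
  set f : Fin (k + 2 * p) → Fin n := Fin.append j q with hfdef
  -- disjointness of values
  have hjq : ∀ (a : Fin k) (b : Fin (2*p)), j a ≠ q b := by
    intro a b hab
    have h1 : j a ∈ J := by simp [hjdef]
    have h2 : j a ∈ Finset.image q Finset.univ := by
      rw [hab]; exact Finset.mem_image_of_mem q (Finset.mem_univ b)
    have : j a ∈ J ∩ Finset.image q Finset.univ := Finset.mem_inter.2 ⟨h1, h2⟩
    rw [hdisj] at this; simp at this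
  -- evaluation of f
  have hfl : ∀ (c : Fin (k + 2 * p)) (h : (c : ℕ) < k), f c = j ⟨c, h⟩ := by
    intro c h
    have h2 : c = Fin.castAdd (2*p) ⟨(c : ℕ), h⟩ := by ext; simp
    conv_lhs => rw [hfdef, h2]
    rw [Fin.append_left]
  have hfr : ∀ (c : Fin (k + 2 * p)) (h : k ≤ (c : ℕ)),
      f c = q ⟨(c : ℕ) - k, by omega⟩ := by
    intro c h
    have hc2 : (c : ℕ) < k + 2 * p := c.isLt
    have h2 : c = Fin.natAdd k ⟨(c : ℕ) - k, by omega⟩ := by ext; simp; omega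
    conv_lhs => rw [hfdef, h2]
    rw [Fin.append_right]
  -- strict comparison of f across the blocks, and injectivity
  have key : ∀ a b : Fin (k + 2 * p), a < b → ((b : ℕ) < k ∨ k ≤ (a : ℕ)) → f a < f b := by
    intro a b hlt hcase
    rcases hcase with hbk | hak
    · have hak : (a : ℕ) < k := lt_trans hlt hbk
      rw [hfl a hak, hfl b hbk]
      exact hj (by simpa [Fin.mk_lt_mk] using hlt)
    · have hbk : k ≤ (b : ℕ) := le_trans hak (le_of_lt hlt)
      rw [hfr a hak, hfr b hbk]
      refine hq ?_
      have : (a : ℕ) < (b : ℕ) := hlt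
      simp [Fin.mk_lt_mk]; omega
  have hfinj : Function.Injective f := by
    have key2 : ∀ a b : Fin (k + 2 * p), a < b → f a ≠ f b := by
      intro a b hlt hab
      by_cases hbk : (b : ℕ) < k
      · exact absurd hab (ne_of_lt (key a b hlt (Or.inl hbk)))
      · push_neg at hbk
        by_cases hak : k ≤ (a : ℕ)
        · exact absurd hab (ne_of_lt (key a b hlt (Or.inr hak)))
        · push_neg at hak
          rw [hfl a hak, hfr b hbk] at hab
          exact hjq _ _ hab
    intro a b hab
    rcases lt_trichotomy a b with h | h | h
    · exact absurd hab (key2 a b h)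
    · exact h
    · exact absurd hab.symm (key2 b a h)
  -- the sorted set T
  have hqinj : Function.Injective q := hq.injective
  set T : Finset (Fin n) := J ∪ Finset.image q Finset.univ with hTdef
  have hT : T.card = k + 2 * p := by
    rw [hTdef, Finset.card_union_of_disjoint (Finset.disjoint_iff_inter_eq_empty.2 hdisj),
      hJ, Finset.card_image_of_injective _ hqinj, Finset.card_univ, Fintype.card_fin]
  have hmemT : ∀ c, f c ∈ T := by
    intro c
    by_cases h : (c : ℕ) < k
    · rw [hfl c h]
      exact Finset.mem_union_left _ (by simp [hjdef])
    · push_neg at h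
      rw [hfr c h]
      exact Finset.mem_union_right _ (Finset.mem_image_of_mem q (Finset.mem_univ _))
  set g : Fin (k + 2 * p) → Fin n := fun a => ((T.orderIsoOfFin hT) a : Fin n) with hgdef
  have hg : StrictMono g := fun a b hab => by
    simpa [hgdef] using (T.orderIsoOfFin hT).strictMono hab
  -- the permutation
  set s : Fin (k + 2 * p) → Fin (k + 2 * p) :=
    fun a => (T.orderIsoOfFin hT).symm ⟨f a, hmemT a⟩ with hsdef
  have hsinj : Function.Injective s := by
    intro a b hab
    apply hfinj
    have := congrArg (T.orderIsoOfFin hT) hab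
    simpa [hsdef] using congrArg Subtype.val this
  set σ : Equiv.Perm (Fin (k + 2 * p)) :=
    Equiv.ofBijective s ((Finite.injective_iff_bijective).1 hsinj) with hσdef
  have hgs : ∀ a, g (σ a) = f a := by
    intro a
    show ((T.orderIsoOfFin hT) ((T.orderIsoOfFin hT).symm ⟨f a, hmemT a⟩) : Fin n) = f a
    rw [OrderIso.apply_symm_apply]
  have hcmp : ∀ a b, σ a < σ b ↔ f a < f b := by
    intro a b
    constructor
    · intro h
      rw [← hgs a, ← hgs b]
      exact hg h
    · intro h
      rcases lt_trichotomy (σ a) (σ b) with h' | h' | h'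
      · exact h'
      · exfalso
        have := congrArg g h'
        rw [hgs a, hgs b] at this
        exact absurd this (ne_of_lt h)
      · exfalso
        have := hg h'
        rw [hgs a, hgs b] at this
        exact absurd h (not_lt_of_gt this)
  -- partner function on positions
  set pa : Fin (k + 2 * p) → Fin (k + 2 * p) :=
    fun c => if ((c : ℕ) - k) % 2 = 0 then c + 1 else c - 1 with hpadef
  have hN2 : 2 ≤ k + 2 * p := by omega
  have hone : ((1 : Fin (k + 2 * p)) : ℕ) = 1 := by
    rw [Fin.val_one']
    exact Nat.mod_eq_of_lt (by omega)
  have haddone : ∀ u : Fin (k + 2 * p), (u : ℕ) + 1 < k + 2 * p →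
      ((u + 1 : Fin (k + 2 * p)) : ℕ) = (u : ℕ) + 1 := by
    intro u hu
    simp only [Fin.add_def, hone]
    exact Nat.mod_eq_of_lt hu
  have hsubone : ∀ u : Fin (k + 2 * p), 1 ≤ (u : ℕ) →
      ((u - 1 : Fin (k + 2 * p)) : ℕ) = (u : ℕ) - 1 := by
    intro u hu
    simp only [Fin.sub_def, hone]
    have hlt := u.isLt
    have he : k + 2 * p - 1 + (u : ℕ) = (k + 2 * p) + ((u : ℕ) - 1) := by omega
    rw [he, Nat.add_mod_left, Nat.mod_eq_of_lt (by omega)]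
  have hinvf : ∀ (u v : Fin (k + 2 * p)), u ≠ v → (σ u ≤ σ v ↔ f u < f v) := by
    intro u v huv
    constructor
    · intro h
      have hne : σ u ≠ σ v := fun e => huv (σ.injective e)
      exact (hcmp u v).1 (lt_of_le_of_ne h hne)
    · intro h
      exact le_of_lt ((hcmp u v).2 h)
  have hstruct : ∀ (u v : Fin (k + 2 * p)), v < u → f u < f v →
      (v : ℕ) < k ∧ k ≤ (u : ℕ) := by
    intro u v hvu hfu
    constructor
    · by_contra h
      push_neg at h
      exact absurd hfu (not_lt_of_gt (key v u hvu (Or.inr h)))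
    · by_contra h
      push_neg at h
      exact absurd hfu (not_lt_of_gt (key v u hvu (Or.inl h)))
  have hvalne : ∀ (a : Fin k) (b : Fin (2 * p)), (j a : ℕ) ≠ (q b : ℕ) := by
    intro a b h
    exact hjq a b (Fin.ext h)
  have hpartner : ∀ (u v : Fin (k + 2 * p)), v < u → f u < f v →
      (v < pa u ∧ pa u ≠ u ∧ f (pa u) < f v ∧ pa (pa u) = u) := by
    intro u v hvu hfu
    obtain ⟨hvk, hku⟩ := hstruct u v hvu hfu
    have hub : (u : ℕ) < k + 2 * p := u.isLt
    have hb2p : (u : ℕ) - k < 2 * p := by omega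
    have hfu' : f u = q ⟨(u : ℕ) - k, hb2p⟩ := hfr u hku
    have hfv' : f v = j ⟨(v : ℕ), hvk⟩ := hfl v hvk
    have hqj : (q ⟨(u : ℕ) - k, hb2p⟩ : ℕ) < (j ⟨(v : ℕ), hvk⟩ : ℕ) := by
      rw [hfu', hfv'] at hfu
      exact hfu
    by_cases hbe : ((u : ℕ) - k) % 2 = 0
    · -- partner is u + 1
      have hb1 : (u : ℕ) - k + 1 < 2 * p := by omega
      have hup1 : ((u + 1 : Fin (k + 2 * p)) : ℕ) = (u : ℕ) + 1 :=
        haddone u (by omega)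
      have hpau : pa u = u + 1 := by rw [hpadef]; simp only [if_pos hbe]
      have hval : (pa u : ℕ) = (u : ℕ) + 1 := by rw [hpau, hup1]
      have hq1 : (q ⟨(u : ℕ) - k + 1, hb1⟩ : ℕ) = (q ⟨(u : ℕ) - k, hb2p⟩ : ℕ) + 1 :=
        hpair ⟨(u : ℕ) - k, hb2p⟩ ⟨(u : ℕ) - k + 1, hb1⟩ hbe rfl
      have hfpa : f (pa u) = q ⟨(u : ℕ) - k + 1, hb1⟩ := by
        rw [hfr (pa u) (by omega)]
        congr 1
        exact Fin.ext (by simp only [hval]; omega)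
      have hne2 : (j ⟨(v : ℕ), hvk⟩ : ℕ) ≠ (q ⟨(u : ℕ) - k + 1, hb1⟩ : ℕ) :=
        hvalne _ _
      refine ⟨?_, ?_, ?_, ?_⟩
      · rw [Fin.lt_def, hval]; omega
      · intro h
        have := congrArg Fin.val h
        rw [hval] at this
        omega
      · rw [hfpa, hfv', Fin.lt_def]
        omega
      · rw [hpau, hpadef]
        simp only
        rw [if_neg (by rw [hup1]; omega), add_sub_cancel_right]
    · -- partner is u - 1
      have hb1 : 1 ≤ (u : ℕ) - k := by omega
      have hu0 : (u : ℕ) ≠ 0 := by omega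
      have hval : ((u - 1 : Fin (k + 2 * p)) : ℕ) = (u : ℕ) - 1 :=
        hsubone u (by omega)
      have hpau : pa u = u - 1 := by rw [hpadef]; simp only [if_neg hbe]
      have hval' : (pa u : ℕ) = (u : ℕ) - 1 := by rw [hpau, hval]
      have hb2p' : (u : ℕ) - k - 1 < 2 * p := by omega
      have hq1 : (q ⟨(u : ℕ) - k, hb2p⟩ : ℕ) = (q ⟨(u : ℕ) - k - 1, hb2p'⟩ : ℕ) + 1 :=
        hpair ⟨(u : ℕ) - k - 1, hb2p'⟩ ⟨(u : ℕ) - k, hb2p⟩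
          (by show ((u : ℕ) - k - 1) % 2 = 0; omega)
          (by show (u : ℕ) - k = ((u : ℕ) - k - 1) + 1; omega)
      have hfpa : f (pa u) = q ⟨(u : ℕ) - k - 1, hb2p'⟩ := by
        rw [hfr (pa u) (by omega)]
        congr 1
        exact Fin.ext (by simp only [hval']; omega)
      refine ⟨?_, ?_, ?_, ?_⟩
      · rw [Fin.lt_def, hval']; omega
      · intro h
        have := congrArg Fin.val h
        rw [hval'] at this
        omega
      · rw [hfpa, hfv', Fin.lt_def]
        omega
      · rw [hpau, hpadef]
        simp only
        rw [if_pos (by rw [hval]; omega), sub_add_cancel]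
  -- the sign of σ is 1
  have hsign : Equiv.Perm.sign σ = 1 := by
    rw [mysign]
    rw [show Equiv.Perm.signAux σ =
      ∏ x ∈ Equiv.Perm.finPairsLT (k + 2 * p), if σ x.1 ≤ σ x.2 then (-1 : ℤˣ) else 1 from rfl]
    refine Finset.prod_involution
      (fun x _ => if σ x.1 ≤ σ x.2 then ⟨pa x.1, x.2⟩ else x) ?_ ?_ ?_ ?_
    · intro x hx
      by_cases hc : σ x.1 ≤ σ x.2
      · have hmem := Equiv.Perm.mem_finPairsLT.1 hx
        have hflt : f x.1 < f x.2 := (hinvf x.1 x.2 (ne_of_gt hmem)).1 hc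
        obtain ⟨h1, h2, h3, h4⟩ := hpartner x.1 x.2 hmem hflt
        have hc' : σ (pa x.1) ≤ σ x.2 := (hinvf _ _ (ne_of_gt h1)).2 h3
        simp only [if_pos hc, if_pos hc']
        decide
      · simp only [if_neg hc, if_neg hc, one_mul]
    · intro x hx hne
      have hc : σ x.1 ≤ σ x.2 := by
        by_contra h
        simp [if_neg h] at hne
      have hmem := Equiv.Perm.mem_finPairsLT.1 hx
      have hflt : f x.1 < f x.2 := (hinvf x.1 x.2 (ne_of_gt hmem)).1 hc
      obtain ⟨h1, h2, h3, h4⟩ := hpartner x.1 x.2 hmem hflt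
      simp only [if_pos hc]
      intro he
      exact h2 (congrArg Sigma.fst he)
    · intro x hx
      by_cases hc : σ x.1 ≤ σ x.2
      · have hmem := Equiv.Perm.mem_finPairsLT.1 hx
        have hflt : f x.1 < f x.2 := (hinvf x.1 x.2 (ne_of_gt hmem)).1 hc
        obtain ⟨h1, h2, h3, h4⟩ := hpartner x.1 x.2 hmem hflt
        simp only [if_pos hc]
        exact Equiv.Perm.mem_finPairsLT.2 h1
      · simp only [if_neg hc]
        exact hx
    · intro x hx
      by_cases hc : σ x.1 ≤ σ x.2
      · have hmem := Equiv.Perm.mem_finPairsLT.1 hx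
        have hflt : f x.1 < f x.2 := (hinvf x.1 x.2 (ne_of_gt hmem)).1 hc
        obtain ⟨h1, h2, h3, h4⟩ := hpartner x.1 x.2 hmem hflt
        have hc' : σ (pa x.1) ≤ σ x.2 := (hinvf _ _ (ne_of_gt h1)).2 h3
        simp only [if_pos hc, if_pos hc', h4]
      · simp only [if_neg hc, if_neg hc]
  -- conclusion
  have hco : g ∘ ⇑σ = f := funext hgs
  have hsub : Z.submatrix id f = (Z.submatrix id g).submatrix id ⇑σ := by
    rw [Matrix.submatrix_submatrix, hco]
    rfl
  calc (0 : ℝ) < (Z.submatrix id g).det := hZ g hg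
  _ = (Z.submatrix id f).det := by
      rw [hsub, Matrix.det_permute', hsign]
      simp

lemma det_zero (k p n : ℕ) (Z : Matrix (Fin (k + 2 * p)) (Fin n) ℝ)
    (q : Fin (2 * p) → Fin n)
    (J : Finset (Fin n)) (hJ : J.card = k)
    (hmeet : J ∩ Finset.image q Finset.univ ≠ ∅) :
    (Z.submatrix id
        (Fin.append (fun a => ((J.orderIsoOfFin hJ) a : Fin n)) q)).det = 0 := by
  obtain ⟨v, hv⟩ := Finset.nonempty_iff_ne_empty.2 hmeet
  rw [Finset.mem_inter] at hv
  obtain ⟨hvJ, hvq⟩ := hv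
  obtain ⟨b, _, hb⟩ := Finset.mem_image.1 hvq
  set a : Fin k := (J.orderIsoOfFin hJ).symm ⟨v, hvJ⟩ with hadef
  have ha : ((J.orderIsoOfFin hJ) a : Fin n) = v := by
    rw [hadef, OrderIso.apply_symm_apply]
  refine Matrix.det_zero_of_column_eq (i := Fin.castAdd (2 * p) a)
    (j := Fin.natAdd k b) ?_ ?_
  · intro h
    have := congrArg Fin.val h
    simp only [Fin.coe_castAdd, Fin.coe_natAdd] at this
    have := a.isLt
    omega
  · intro r
    simp only [Matrix.submatrix_apply, Fin.append_left, Fin.append_right, ha, hb]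

/-- Facet inequalities of the exterior cyclic polytope for even `m = 2p`: let
`Z ∈ Mat_{>0}(k+2p, n)` be a matrix with positive maximal minors and let
`q : Fin (2p) → Fin n` be the strictly increasing sequence `i₁, i₁+1, …, i_p, i_p+1`
of indices of the `p` consecutive pairs (so consecutive entries of `q` in even/odd
positions differ by one).  For a `k`-subset `J` of the columns, the value of the linear
form `⟨Y (i₁ i₁+1) ⋯ (i_p i_p+1)⟩` at the vertex `Z_{j₁} ∧ ⋯ ∧ Z_{jₖ}` of
`C_{k,2p,n}(Z)` is the maximal minor `br J` of `Z` on the columns `J` followed by the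
pairs.  Then `br J` vanishes exactly when `J` meets the pair indices, is strictly
positive otherwise (so all remaining vertices lie strictly on one side), and the
hyperplane contains exactly `C(n,k) − C(n−2p,k)` vertices; in particular for `n = k+2p`
it contains `C(k+2p,k) − 1` of them. -/
theorem stmt_11 (k p n : ℕ) (hp : 0 < p) (hn : k + 2 * p ≤ n)
    (Z : Matrix (Fin (k + 2 * p)) (Fin n) ℝ)
    (hZ : ∀ g : Fin (k + 2 * p) → Fin n, StrictMono g → 0 < (Z.submatrix id g).det)
    (q : Fin (2 * p) → Fin n) (hq : StrictMono q)
    (hpair : ∀ b b' : Fin (2 * p), (b : ℕ) % 2 = 0 → (b' : ℕ) = (b : ℕ) + 1 →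
      (q b' : ℕ) = (q b : ℕ) + 1) :
    ∀ br : {s : Finset (Fin n) // s.card = k} → ℝ,
      (br = fun J => (Z.submatrix id
          (Fin.append (fun a => ((J.1.orderIsoOfFin J.2) a : Fin n)) q)).det) →
      (∀ J : {s : Finset (Fin n) // s.card = k},
          (J.1 ∩ Finset.image q Finset.univ = ∅ → 0 < br J) ∧
          (J.1 ∩ Finset.image q Finset.univ ≠ ∅ → br J = 0)) ∧
      (Finset.univ.filter
          (fun J : {s : Finset (Fin n) // s.card = k} => br J = 0)).card
        = Nat.choose n k - Nat.choose (n - 2 * p) k ∧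
      (n = k + 2 * p →
        (Finset.univ.filter
            (fun J : {s : Finset (Fin n) // s.card = k} => br J = 0)).card
          = Nat.choose (k + 2 * p) k - 1) := by
  intro br hbr
  subst hbr
  have hmain : ∀ J : {s : Finset (Fin n) // s.card = k},
      (J.1 ∩ Finset.image q Finset.univ = ∅ →
        0 < (Z.submatrix id
          (Fin.append (fun a => ((J.1.orderIsoOfFin J.2) a : Fin n)) q)).det) ∧
      (J.1 ∩ Finset.image q Finset.univ ≠ ∅ →
        (Z.submatrix id
          (Fin.append (fun a => ((J.1.orderIsoOfFin J.2) a : Fin n)) q)).det = 0) := by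
    intro J
    exact ⟨fun h => det_pos k p n hp hn Z hZ q hq hpair J.1 J.2 h,
      fun h => det_zero k p n Z q J.1 J.2 h⟩
  have hcount :
      (Finset.univ.filter
          (fun J : {s : Finset (Fin n) // s.card = k} =>
            (Z.submatrix id
              (Fin.append (fun a => ((J.1.orderIsoOfFin J.2) a : Fin n)) q)).det = 0)).card
        = Nat.choose n k - Nat.choose (n - 2 * p) k := by
    have hqinj : Function.Injective q := hq.injective
    set S : Finset (Fin n) := Finset.image q Finset.univ with hSdef
    have hS : S.card = 2 * p := by
      rw [hSdef, Finset.card_image_of_injective _ hqinj, Finset.card_univ, Fintype.card_fin]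
    have hfe : (Finset.univ.filter
          (fun J : {s : Finset (Fin n) // s.card = k} =>
            (Z.submatrix id
              (Fin.append (fun a => ((J.1.orderIsoOfFin J.2) a : Fin n)) q)).det = 0))
        = Finset.univ.filter (fun J : {s : Finset (Fin n) // s.card = k} =>
            ¬ (J.1 ∩ S = ∅)) := by
      ext J
      simp only [Finset.mem_filter, Finset.mem_univ, true_and]
      constructor
      · intro h hc
        exact absurd h (ne_of_gt ((hmain J).1 hc))
      · intro h
        exact (hmain J).2 h
    rw [hfe]
    have htot := Finset.card_filter_add_card_filter_not
      (s := (Finset.univ : Finset {s : Finset (Fin n) // s.card = k}))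
      (p := fun J => J.1 ∩ S = ∅)
    have hcardU : (Finset.univ : Finset {s : Finset (Fin n) // s.card = k}).card
        = Nat.choose n k := by
      rw [Finset.card_univ]
      simpa using Fintype.card_finset_len (α := Fin n) k
    have hcardA : (Finset.univ.filter
        (fun J : {s : Finset (Fin n) // s.card = k} => J.1 ∩ S = ∅)).card
        = Nat.choose (n - 2 * p) k := by
      have hcompl : Sᶜ.card = n - 2 * p := by
        rw [Finset.card_compl, hS, Fintype.card_fin]
      rw [← hcompl, ← Finset.card_powersetCard]
      refine Finset.card_bij (fun J _ => J.1) ?_ ?_ ?_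
      · intro J hJ
        rw [Finset.mem_filter] at hJ
        rw [Finset.mem_powersetCard]
        refine ⟨fun x hx => ?_, J.2⟩
        rw [Finset.mem_compl]
        intro hxS
        have : x ∈ J.1 ∩ S := Finset.mem_inter.2 ⟨hx, hxS⟩
        rw [hJ.2] at this
        simp at this
      · intro J₁ _ J₂ _ h
        exact Subtype.ext h
      · intro s hs
        rw [Finset.mem_powersetCard] at hs
        refine ⟨⟨s, hs.2⟩, ?_, rfl⟩
        rw [Finset.mem_filter]
        refine ⟨Finset.mem_univ _, ?_⟩
        rw [Finset.eq_empty_iff_forall_notMem]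
        intro x hx
        rw [Finset.mem_inter] at hx
        exact absurd hx.2 (Finset.mem_compl.1 (hs.1 hx.1))
    have hle : Nat.choose (n - 2 * p) k ≤ Nat.choose n k :=
      Nat.choose_le_choose k (by omega)
    omega
  refine ⟨hmain, hcount, fun hnn => ?_⟩
  rw [hcount, hnn, Nat.add_sub_cancel, Nat.choose_self]
end

section
/- The twist images reproduce lines: for W = τ(Z) the twist of Z ∈ Mat_{>0}(4, n) (k = m = 2), applying the twist construction again satisfies τ(W)_i ∧ τ(W)_j = λ · Z_i ∧ Z_j in ∧²ℝ⁴ for some nonzero scalar λ; i.e., as points of ℙ(∧²ℝ⁴), τ(W)_i ∧ τ(W)_j = (ij). -/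
/-- The Hodge-star vector `∗(a ∧ b ∧ c) ∈ ℝ⁴` of three vectors in `ℝ⁴`. -/
noncomputable def hodge3 (a b c : Fin 4 → ℝ) : Fin 4 → ℝ := fun r =>
  (-1 : ℝ) ^ ((r : ℕ) + 1) *
    (Matrix.of fun s t : Fin 3 => ![a, b, c] t (r.succAbove s)).det

/-- The columns of `Z`, extended to all integer indices by the twisted cyclic convention
`Z_{a+n} = −Z_a` (`k = 2`). -/
noncomputable def tcol {n : ℕ} (hn : 0 < n) (Z : Matrix (Fin 4) (Fin n) ℝ) (a : ℤ) :
    Fin 4 → ℝ := fun r =>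
  (-1 : ℝ) ^ (a / (n : ℤ)) * Z r ⟨(a % (n : ℤ)).toNat, by
    have h1 : 0 ≤ a % (n : ℤ) := Int.emod_nonneg a (by exact_mod_cast hn.ne')
    have h2 : a % (n : ℤ) < (n : ℤ) := Int.emod_lt_of_pos a (by exact_mod_cast hn)
    omega⟩

/-- The twist vector `W_a := Z_{a−1} ∧ Z_a ∧ Z_{a+1}`, the `a`-th column of the twist
matrix `τ(Z)` (via the identification `∧³ℝ⁴ ≅ ℝ⁴`). -/
noncomputable def twistCol {n : ℕ} (hn : 0 < n) (Z : Matrix (Fin 4) (Fin n) ℝ) (a : ℤ) :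
    Fin 4 → ℝ :=
  hodge3 (tcol hn Z (a - 1)) (tcol hn Z a) (tcol hn Z (a + 1))

/-- The twist matrix `τ(Z)`, with columns `W_1, …, W_n`. -/
noncomputable def twistMat {n : ℕ} (hn : 0 < n) (Z : Matrix (Fin 4) (Fin n) ℝ) :
    Matrix (Fin 4) (Fin n) ℝ :=
  Matrix.of fun r a => twistCol hn Z (a : ℤ) r

/-- `Z` has positive maximal minors. -/
def posMat {n : ℕ} (Z : Matrix (Fin 4) (Fin n) ℝ) : Prop :=
  ∀ g : Fin 4 → Fin n, StrictMono g → 0 < (Z.submatrix id g).det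

/-- The bivector `u ∧ v ∈ ∧²ℝ⁴`, as an antisymmetric `4 × 4` matrix. -/
noncomputable def bivec (u v : Fin 4 → ℝ) : Matrix (Fin 4) (Fin 4) ℝ :=
  fun c d => u c * v d - u d * v c

/-! ### Auxiliary lemmas -/

theorem hodge3_zero (a b c : Fin 4 → ℝ) : hodge3 a b c 0 =
    -(a 1 * b 2 * c 3 - a 1 * b 3 * c 2 - a 2 * b 1 * c 3 + a 2 * b 3 * c 1
      + a 3 * b 1 * c 2 - a 3 * b 2 * c 1) := by
  simp only [hodge3, Matrix.det_fin_three, Matrix.of_apply]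
  norm_num [Fin.succAbove, Fin.lt_def, show (Fin.succ 2 : Fin 4) = 3 from rfl,
    show (Fin.succ 1 : Fin 4) = 2 from rfl, show (Fin.succ 0 : Fin 4) = 1 from rfl,
    show ((3:Fin 4):ℕ) = 3 from rfl, show (Fin.castSucc 2 : Fin 4) = 2 from rfl,
    Matrix.cons_val_two]
  ring

theorem hodge3_one (a b c : Fin 4 → ℝ) : hodge3 a b c 1 =
    (a 0 * b 2 * c 3 - a 0 * b 3 * c 2 - a 2 * b 0 * c 3 + a 2 * b 3 * c 0
      + a 3 * b 0 * c 2 - a 3 * b 2 * c 0) := by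
  simp only [hodge3, Matrix.det_fin_three, Matrix.of_apply]
  norm_num [Fin.succAbove, Fin.lt_def, show (Fin.succ 2 : Fin 4) = 3 from rfl,
    show (Fin.succ 1 : Fin 4) = 2 from rfl, show (Fin.succ 0 : Fin 4) = 1 from rfl,
    show ((3:Fin 4):ℕ) = 3 from rfl, show (Fin.castSucc 2 : Fin 4) = 2 from rfl,
    Matrix.cons_val_two]
  ring

theorem hodge3_two (a b c : Fin 4 → ℝ) : hodge3 a b c 2 =
    -(a 0 * b 1 * c 3 - a 0 * b 3 * c 1 - a 1 * b 0 * c 3 + a 1 * b 3 * c 0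
      + a 3 * b 0 * c 1 - a 3 * b 1 * c 0) := by
  simp only [hodge3, Matrix.det_fin_three, Matrix.of_apply]
  norm_num [Fin.succAbove, Fin.lt_def, show (Fin.succ 2 : Fin 4) = 3 from rfl,
    show (Fin.succ 1 : Fin 4) = 2 from rfl, show (Fin.succ 0 : Fin 4) = 1 from rfl,
    show ((3:Fin 4):ℕ) = 3 from rfl, show (Fin.castSucc 2 : Fin 4) = 2 from rfl,
    Matrix.cons_val_two]
  ring

theorem hodge3_three (a b c : Fin 4 → ℝ) : hodge3 a b c 3 =
    (a 0 * b 1 * c 2 - a 0 * b 2 * c 1 - a 1 * b 0 * c 2 + a 1 * b 2 * c 0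
      + a 2 * b 0 * c 1 - a 2 * b 1 * c 0) := by
  simp only [hodge3, Matrix.det_fin_three, Matrix.of_apply]
  norm_num [Fin.succAbove, Fin.lt_def, show (Fin.succ 2 : Fin 4) = 3 from rfl,
    show (Fin.succ 1 : Fin 4) = 2 from rfl, show (Fin.succ 0 : Fin 4) = 1 from rfl,
    show ((3:Fin 4):ℕ) = 3 from rfl, show (Fin.castSucc 2 : Fin 4) = 2 from rfl,
    Matrix.cons_val_two]
  ring

/-- An explicit `4×4` determinant with columns `a b c d`. -/
noncomputable def det4 (a b c d : Fin 4 → ℝ) : ℝ :=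
  a 0 * hodge3 b c d 0 + a 1 * hodge3 b c d 1 + a 2 * hodge3 b c d 2 + a 3 * hodge3 b c d 3

set_option maxHeartbeats 2000000 in
theorem key0 (a b c d e : Fin 4 → ℝ) :
    hodge3 (hodge3 a b c) (hodge3 b c d) (hodge3 c d e) 0
      = -(det4 a b c d * det4 b c d e) * c 0 := by
  simp only [hodge3_zero, hodge3_one, hodge3_two, hodge3_three, det4]
  ring

set_option maxHeartbeats 2000000 in
theorem key1 (a b c d e : Fin 4 → ℝ) :
    hodge3 (hodge3 a b c) (hodge3 b c d) (hodge3 c d e) 1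
      = -(det4 a b c d * det4 b c d e) * c 1 := by
  simp only [hodge3_zero, hodge3_one, hodge3_two, hodge3_three, det4]
  ring

set_option maxHeartbeats 2000000 in
theorem key2 (a b c d e : Fin 4 → ℝ) :
    hodge3 (hodge3 a b c) (hodge3 b c d) (hodge3 c d e) 2
      = -(det4 a b c d * det4 b c d e) * c 2 := by
  simp only [hodge3_zero, hodge3_one, hodge3_two, hodge3_three, det4]
  ring

set_option maxHeartbeats 2000000 in
theorem key3 (a b c d e : Fin 4 → ℝ) :
    hodge3 (hodge3 a b c) (hodge3 b c d) (hodge3 c d e) 3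
      = -(det4 a b c d * det4 b c d e) * c 3 := by
  simp only [hodge3_zero, hodge3_one, hodge3_two, hodge3_three, det4]
  ring

theorem key (a b c d e : Fin 4 → ℝ) :
    hodge3 (hodge3 a b c) (hodge3 b c d) (hodge3 c d e)
      = (-(det4 a b c d * det4 b c d e)) • c := by
  funext r
  fin_cases r
  · exact key0 a b c d e
  · exact key1 a b c d e
  · exact key2 a b c d e
  · exact key3 a b c d e

theorem hodge3_smul (s t u : ℝ) (a b c : Fin 4 → ℝ) :
    hodge3 (s • a) (t • b) (u • c) = (s * t * u) • hodge3 a b c := by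
  have h0 : hodge3 (s • a) (t • b) (u • c) 0 = ((s * t * u) • hodge3 a b c) 0 := by
    simp only [hodge3_zero, Pi.smul_apply, smul_eq_mul]; ring
  have h1 : hodge3 (s • a) (t • b) (u • c) 1 = ((s * t * u) • hodge3 a b c) 1 := by
    simp only [hodge3_one, Pi.smul_apply, smul_eq_mul]; ring
  have h2 : hodge3 (s • a) (t • b) (u • c) 2 = ((s * t * u) • hodge3 a b c) 2 := by
    simp only [hodge3_two, Pi.smul_apply, smul_eq_mul]; ring
  have h3 : hodge3 (s • a) (t • b) (u • c) 3 = ((s * t * u) • hodge3 a b c) 3 := by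
    simp only [hodge3_three, Pi.smul_apply, smul_eq_mul]; ring
  funext r
  fin_cases r
  · exact h0
  · exact h1
  · exact h2
  · exact h3

theorem det4_smul (s t u v : ℝ) (a b c d : Fin 4 → ℝ) :
    det4 (s • a) (t • b) (u • c) (v • d) = (s * t * u * v) * det4 a b c d := by
  simp only [det4, hodge3_smul, Pi.smul_apply, smul_eq_mul]
  ring

theorem neg_one_zpow_mul_self (q : ℤ) : ((-1 : ℝ) ^ q) * ((-1 : ℝ) ^ q) = 1 := by
  rw [← zpow_add₀ (by norm_num : (-1 : ℝ) ≠ 0)]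
  exact Even.neg_one_zpow ⟨q, rfl⟩

/-- The residue index in `Fin n`. -/
def residue {n : ℕ} (hn : 0 < n) (a : ℤ) : Fin n :=
  ⟨(a % (n : ℤ)).toNat, by
    have h1 : 0 ≤ a % (n : ℤ) := Int.emod_nonneg a (by exact_mod_cast hn.ne')
    have h2 : a % (n : ℤ) < (n : ℤ) := Int.emod_lt_of_pos a (by exact_mod_cast hn)
    omega⟩

theorem tcol_spec {n : ℕ} (hn : 0 < n) (Z : Matrix (Fin 4) (Fin n) ℝ) (a : ℤ) :
    tcol hn Z a = ((-1 : ℝ) ^ (a / (n : ℤ))) • fun r => Z r (residue hn a) := rfl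

theorem tcol_add_mul {n : ℕ} (hn : 0 < n) (Z : Matrix (Fin 4) (Fin n) ℝ) (a q : ℤ) :
    tcol hn Z (a + q * n) = ((-1 : ℝ) ^ q) • tcol hn Z a := by
  have hne : (n : ℤ) ≠ 0 := by exact_mod_cast hn.ne'
  have h1 : (a + q * n) / (n : ℤ) = a / n + q := Int.add_mul_ediv_right a q hne
  have h2 : (a + q * n) % (n : ℤ) = a % n := Int.add_mul_emod_self_right ..
  funext r
  simp only [tcol, h1, h2, Pi.smul_apply, smul_eq_mul,
    zpow_add₀ (by norm_num : (-1 : ℝ) ≠ 0)]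
  ring

theorem twistCol_add_mul {n : ℕ} (hn : 0 < n) (Z : Matrix (Fin 4) (Fin n) ℝ) (a q : ℤ) :
    twistCol hn Z (a + q * n) = ((-1 : ℝ) ^ q) • twistCol hn Z a := by
  unfold twistCol
  rw [show a + q * n - 1 = (a - 1) + q * n by ring, show a + q * n + 1 = (a + 1) + q * n by ring,
    tcol_add_mul, tcol_add_mul, tcol_add_mul, hodge3_smul]
  congr 1
  rw [mul_assoc, neg_one_zpow_mul_self, mul_one]

theorem tcol_twistMat {n : ℕ} (hn : 0 < n) (Z : Matrix (Fin 4) (Fin n) ℝ) (b : ℤ) :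
    tcol hn (twistMat hn Z) b = twistCol hn Z b := by
  have h1 : 0 ≤ b % (n : ℤ) := Int.emod_nonneg b (by exact_mod_cast hn.ne')
  have hb : ((b % (n : ℤ)).toNat : ℤ) + (b / n) * n = b := by
    rw [Int.toNat_of_nonneg h1, mul_comm]
    exact Int.emod_add_mul_ediv b (n : ℤ)
  have key2 : twistCol hn Z b
      = ((-1 : ℝ) ^ (b / (n : ℤ))) • twistCol hn Z ((b % (n : ℤ)).toNat : ℤ) := by
    conv_lhs => rw [← hb]
    exact twistCol_add_mul hn Z _ _
  funext r
  have : ((residue hn b : Fin n) : ℤ) = ((b % (n : ℤ)).toNat : ℤ) := rfl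
  rw [key2]
  simp only [tcol, twistMat, Matrix.of_apply, Pi.smul_apply, smul_eq_mul]

theorem tcol_coe {n : ℕ} (hn : 0 < n) (Z : Matrix (Fin 4) (Fin n) ℝ) (i : Fin n) :
    tcol hn Z (i : ℤ) = fun r => Z r i := by
  have h1 : ((i : ℤ)) / (n : ℤ) = 0 :=
    Int.ediv_eq_zero_of_lt (by positivity) (by exact_mod_cast i.isLt)
  have h2 : ((i : ℤ)) % (n : ℤ) = (i : ℤ) :=
    Int.emod_eq_of_lt (by positivity) (by exact_mod_cast i.isLt)
  funext r
  simp only [tcol, h1, h2, zpow_zero, one_mul]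
  congr 1

theorem bivec_smul (s t : ℝ) (u v : Fin 4 → ℝ) :
    bivec (s • u) (t • v) = (s * t) • bivec u v := by
  funext c d
  simp only [bivec, Pi.smul_apply, smul_eq_mul, Matrix.smul_apply]
  ring

theorem det4_eq_det (M : Matrix (Fin 4) (Fin 4) ℝ) :
    det4 (fun r => M r 0) (fun r => M r 1) (fun r => M r 2) (fun r => M r 3) = -M.det := by
  rw [Matrix.det_succ_column_zero]
  simp only [Fin.sum_univ_four, det4, hodge3_zero, hodge3_one, hodge3_two, hodge3_three,
    Matrix.det_fin_three, Matrix.submatrix_apply]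
  norm_num [Fin.succAbove, Fin.lt_def, show (Fin.succ 2 : Fin 4) = 3 from rfl,
    show (Fin.succ 1 : Fin 4) = 2 from rfl, show (Fin.succ 0 : Fin 4) = 1 from rfl,
    show ((3:Fin 4):ℕ) = 3 from rfl, show (Fin.castSucc 2 : Fin 4) = 2 from rfl]
  ring

theorem residue_inj {n : ℕ} (hn : 0 < n) (hn4 : 4 ≤ n) (x y : ℤ)
    (hxy : 0 < y - x) (hlt : y - x < 4) : residue hn x ≠ residue hn y := by
  intro h
  have hx : 0 ≤ x % (n : ℤ) := Int.emod_nonneg x (by exact_mod_cast hn.ne')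
  have hy : 0 ≤ y % (n : ℤ) := Int.emod_nonneg y (by exact_mod_cast hn.ne')
  have hval : (x % (n : ℤ)).toNat = (y % (n : ℤ)).toNat := congrArg Fin.val h
  have hmod : x % (n : ℤ) = y % (n : ℤ) := by omega
  have hdvd : (n : ℤ) ∣ y - x := Int.ModEq.dvd hmod
  have := Int.le_of_dvd hxy hdvd
  omega

theorem det4_tcol_ne {n : ℕ} (hn : 0 < n) (hn4 : 4 ≤ n) (Z : Matrix (Fin 4) (Fin n) ℝ)
    (hZ : posMat Z) (a : ℤ) :
    det4 (tcol hn Z a) (tcol hn Z (a + 1)) (tcol hn Z (a + 2)) (tcol hn Z (a + 3)) ≠ 0 := by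
  set g : Fin 4 → Fin n :=
    ![residue hn a, residue hn (a + 1), residue hn (a + 2), residue hn (a + 3)] with hg
  have hginj : Function.Injective g := by
    intro k l hkl
    fin_cases k <;> fin_cases l <;> first
      | rfl
      | (exfalso; revert hkl; simp only [hg, Matrix.cons_val_zero, Matrix.cons_val_one,
          Matrix.head_cons, Matrix.cons_val_two, Matrix.tail_cons, Matrix.cons_val_three]
         first
           | exact residue_inj hn hn4 _ _ (by omega) (by omega)
           | exact fun hh => residue_inj hn hn4 _ _ (by omega) (by omega) hh.symm)
  have hdet : det4 (fun r => Z r (g 0)) (fun r => Z r (g 1)) (fun r => Z r (g 2))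
      (fun r => Z r (g 3)) ≠ 0 := by
    rw [show (fun r => Z r (g 0)) = (fun r => (Z.submatrix id g) r 0) from rfl,
      show (fun r => Z r (g 1)) = (fun r => (Z.submatrix id g) r 1) from rfl,
      show (fun r => Z r (g 2)) = (fun r => (Z.submatrix id g) r 2) from rfl,
      show (fun r => Z r (g 3)) = (fun r => (Z.submatrix id g) r 3) from rfl,
      det4_eq_det, neg_ne_zero]
    set σ := Tuple.sort g with hσ
    have hmono : StrictMono (g ∘ σ) :=
      (Tuple.monotone_sort g).strictMono_of_injective (hginj.comp σ.injective)
    have hpos : 0 < (Z.submatrix id (g ∘ σ)).det := hZ _ hmono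
    have hperm : ((Z.submatrix id g).submatrix id σ).det
        = (Equiv.Perm.sign σ : ℤ) * (Z.submatrix id g).det := by
      exact_mod_cast Matrix.det_permute' σ (Z.submatrix id g)
    rw [Matrix.submatrix_submatrix] at hperm
    have : Z.submatrix (id ∘ id) (g ∘ σ) = Z.submatrix id (g ∘ σ) := rfl
    rw [this] at hperm
    intro h0
    rw [h0, mul_zero] at hperm
    exact hpos.ne' hperm
  have e0 : tcol hn Z a = ((-1 : ℝ) ^ (a / (n : ℤ))) • fun r => Z r (g 0) := tcol_spec hn Z a
  have e1 : tcol hn Z (a + 1)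
      = ((-1 : ℝ) ^ ((a + 1) / (n : ℤ))) • fun r => Z r (g 1) := tcol_spec hn Z (a + 1)
  have e2 : tcol hn Z (a + 2)
      = ((-1 : ℝ) ^ ((a + 2) / (n : ℤ))) • fun r => Z r (g 2) := tcol_spec hn Z (a + 2)
  have e3 : tcol hn Z (a + 3)
      = ((-1 : ℝ) ^ ((a + 3) / (n : ℤ))) • fun r => Z r (g 3) := tcol_spec hn Z (a + 3)
  rw [e0, e1, e2, e3, det4_smul]
  refine mul_ne_zero ?_ hdet
  have : ∀ q : ℤ, ((-1 : ℝ) ^ q) ≠ 0 := fun q => zpow_ne_zero q (by norm_num)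
  positivity

theorem twistCol_twistMat {n : ℕ} (hn : 0 < n) (Z : Matrix (Fin 4) (Fin n) ℝ) (a : ℤ) :
    twistCol hn (twistMat hn Z) a
      = (-(det4 (tcol hn Z (a - 2)) (tcol hn Z (a - 1)) (tcol hn Z a) (tcol hn Z (a + 1))
          * det4 (tcol hn Z (a - 1)) (tcol hn Z a) (tcol hn Z (a + 1)) (tcol hn Z (a + 2))))
        • tcol hn Z a := by
  unfold twistCol
  rw [tcol_twistMat, tcol_twistMat, tcol_twistMat]
  unfold twistCol
  rw [show a - 1 - 1 = a - 2 by ring, show a - 1 + 1 = a by ring,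
    show a + 1 - 1 = a by ring, show a + 1 + 1 = a + 2 by ring]
  exact key _ _ _ _ _

/-- The twist images reproduce lines (`k = m = 2`): for `W = τ(Z)` the twist of
`Z ∈ Mat_{>0}(4,n)`, applying the twist construction again satisfies
`τ(W)_i ∧ τ(W)_j = λ · Z_i ∧ Z_j` in `∧²ℝ⁴` for some nonzero scalar `λ`; i.e., as points
of `ℙ(∧²ℝ⁴)`, `τ(W)_i ∧ τ(W)_j = (ij)`. -/
theorem stmt_18 {n : ℕ} (hn4 : 4 ≤ n) (hn : 0 < n) (Z : Matrix (Fin 4) (Fin n) ℝ)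
    (hZ : posMat Z) (i j : Fin n) (hij : i ≠ j) :
    ∃ c : ℝ, c ≠ 0 ∧
      bivec (twistCol hn (twistMat hn Z) (i : ℤ)) (twistCol hn (twistMat hn Z) (j : ℤ))
        = c • bivec (fun r => Z r i) (fun r => Z r j) := by
  have hne : ∀ a : ℤ,
      (-(det4 (tcol hn Z (a - 2)) (tcol hn Z (a - 1)) (tcol hn Z a) (tcol hn Z (a + 1))
        * det4 (tcol hn Z (a - 1)) (tcol hn Z a) (tcol hn Z (a + 1)) (tcol hn Z (a + 2)))) ≠ 0 := by
    intro a
    have h1 := det4_tcol_ne hn hn4 Z hZ (a - 2)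
    have h2 := det4_tcol_ne hn hn4 Z hZ (a - 1)
    rw [show a - 2 + 1 = a - 1 by ring, show a - 2 + 2 = a by ring,
      show a - 2 + 3 = a + 1 by ring] at h1
    rw [show a - 1 + 1 = a by ring, show a - 1 + 2 = a + 1 by ring,
      show a - 1 + 3 = a + 2 by ring] at h2
    exact neg_ne_zero.mpr (mul_ne_zero h1 h2)
  have hZi := tcol_coe hn Z i
  have hZj := tcol_coe hn Z j
  have Hi := twistCol_twistMat hn Z (i : ℤ)
  have Hj := twistCol_twistMat hn Z (j : ℤ)
  have hnei := hne (i : ℤ)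
  have hnej := hne (j : ℤ)
  rw [hZi] at Hi hnei
  rw [hZj] at Hj hnej
  exact ⟨_, mul_ne_zero hnei hnej, by rw [Hi, Hj, bivec_smul]⟩
end
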